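/- The minimum wirelength of embedding the hypercube Q^6 into the torus C_8 × C_8 is 320. -/

import Mathlib

/-- The hypercube graph `Q^d` on `{0,1}^d`: two strings are adjacent iff they differ
in exactly one coordinate. -/
def Q (d : ℕ) : SimpleGraph (Fin d → Bool) where
  Adj x y := hammingDist x y = 1
  symm := ⟨by intro x y h; rwa [hammingDist_comm]⟩
  loopless := ⟨by intro x h; simp [hammingDist_self] at h⟩

/-- The path graph `P_n` on vertices `0, …, n-1`. -/
def pathGraph (n : ℕ) : SimpleGraph (Fin n) where
  Adj i j := i.val + 1 = j.val ∨ j.val + 1 = i.val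
  symm := ⟨fun _ _ h => h.symm⟩
  loopless := ⟨fun _ h => by cases h <;> omega⟩

/-- The cycle graph `C_n` on vertices `0, …, n-1` (with wraparound edge). -/
def cycleGraph (n : ℕ) : SimpleGraph (Fin n) where
  Adj i j := i ≠ j ∧ ((i.val + 1) % n = j.val ∨ (j.val + 1) % n = i.val)
  symm := ⟨fun _ _ h => ⟨h.1.symm, h.2.symm⟩⟩
  loopless := ⟨fun _ h => h.1 rfl⟩

/-- An embedding of `G` into `H`: a vertex bijection together with a path in `H`
assigned to each edge of `G`. -/
structure Embed {α β : Type*} (G : SimpleGraph α) (H : SimpleGraph β) where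
  toEquiv : α ≃ β
  path : ∀ u v, G.Adj u v → H.Walk (toEquiv u) (toEquiv v)
  isPath : ∀ u v (h : G.Adj u v), (path u v h).IsPath
  symmPath : ∀ u v (h : G.Adj u v), path v u h.symm = (path u v h).reverse

open Classical in
/-- The length of the path assigned by `f` to an edge of `G`. -/
noncomputable def pathLen {α β : Type*} {G : SimpleGraph α} {H : SimpleGraph β}
    (f : Embed G H) : Sym2 α → ℕ :=
  Sym2.lift ⟨fun u v => if h : G.Adj u v then (f.path u v h).length else 0, by
    intro u v
    dsimp only
    by_cases h : G.Adj u v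
    · rw [dif_pos h, dif_pos h.symm, f.symmPath u v h, SimpleGraph.Walk.length_reverse]
    · rw [dif_neg h, dif_neg (fun h' => h h'.symm)]⟩

/-- `pathUses f e e'` : the path assigned by `f` to the `G`-edge `e'` uses the `H`-edge `e`. -/
def pathUses {α β : Type*} {G : SimpleGraph α} {H : SimpleGraph β}
    (f : Embed G H) (e : Sym2 β) : Sym2 α → Prop :=
  Sym2.lift ⟨fun u v => ∃ h : G.Adj u v, e ∈ (f.path u v h).edges, by
    intro u v
    dsimp only
    apply propext
    have key : ∀ (a b : α) (h : G.Adj a b) (h' : G.Adj b a),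
        (f.path b a h').edges = ((f.path a b h).edges).reverse := by
      intro a b h h'
      rw [Subsingleton.elim h' h.symm, f.symmPath a b h, SimpleGraph.Walk.edges_reverse]
    constructor
    · rintro ⟨h, he⟩
      exact ⟨h.symm, by rw [key u v h h.symm, List.mem_reverse]; exact he⟩
    · rintro ⟨h, he⟩
      refine ⟨h.symm, ?_⟩
      rw [key v u h h.symm, List.mem_reverse]
      exact he⟩

/-- The congestion `EC_f(e)` of an `H`-edge `e`: the number of edges of `G` whose
assigned path uses `e`. -/
noncomputable def EC {α β : Type*} {G : SimpleGraph α} {H : SimpleGraph β}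
    (f : Embed G H) (e : Sym2 β) : ℕ :=
  {e' : Sym2 α | e' ∈ G.edgeSet ∧ pathUses f e e'}.ncard

/-- The congestion `EC_f(S)` of a set `S` of `H`-edges. -/
noncomputable def ECS {α β : Type*} {G : SimpleGraph α} {H : SimpleGraph β}
    (f : Embed G H) (S : Finset (Sym2 β)) : ℕ :=
  ∑ e ∈ S, EC f e

/-- The wirelength of an embedding: the total length of the assigned paths over all
edges of `G`. -/
noncomputable def wirelength {α β : Type*} {G : SimpleGraph α} {H : SimpleGraph β}
    (f : Embed G H) : ℕ :=
  ∑ᶠ e ∈ G.edgeSet, pathLen f e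

/-- The minimum wirelength over all embeddings of `G` into `H`. -/
noncomputable def minWL {α β : Type*} (G : SimpleGraph α) (H : SimpleGraph β) : ℕ :=
  sInf {n | ∃ f : Embed G H, wirelength f = n}

/-!
Lower bound: cut the torus by the 16 bands of three consecutive rows or of three consecutive
columns. Each band has 24 vertices and every torus edge leaves exactly two bands, so a path of
length `ℓ` separates its ends by at most `2ℓ` bands. By the edge-isoperimetric inequality for the
hypercube, a 24-set spans at most 52 edges of `Q^6` and a 40-set at most 100, so the preimage of
each band is left by at least `6 · 24 - 2 · 52 = 40` edges of `Q^6`. Hence `2 · WL ≥ 16 · 40`.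

Upper bound: place each half of a 6-bit string along a Gray-code Hamiltonian cycle of `Q^3` in
`C_8` and route every edge along a shortest path. A `Q^3` then costs `8 · 1 + 4 · 3 = 20`, and
`Q^6 = Q^3 □ Q^3` consists of 16 such copies.
-/

open Finset

namespace SimpleGraph

variable {V M : Type*} [Fintype V] [DecidableEq V] [AddCommMonoid M] (G : SimpleGraph V)
  [DecidableRel G.Adj]

lemma sum_dart_edge (F : Sym2 V → M) : ∑ d : G.Dart, F d.edge = 2 • ∑ e ∈ G.edgeFinset, F e := by
  rw [← sum_fiberwise_of_maps_to (fun d _ => G.mem_edgeFinset.2 d.edge_mem), smul_sum]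
  refine sum_congr rfl fun e he => ?_
  rw [sum_congr rfl fun d hd => congrArg F (mem_filter.1 hd).2, sum_const,
    G.dart_edge_fiber_card e (G.mem_edgeFinset.1 he)]

lemma sum_dart_eq_sum_sum_adj (g : V → V → M) :
    ∑ d : G.Dart, g d.fst d.snd = ∑ u, ∑ v with G.Adj u v, g u v := by
  rw [← sum_fiberwise univ fun d : G.Dart => d.fst]
  refine sum_congr rfl fun u _ => ?_
  refine sum_bij' (fun d _ => d.snd) (fun v hv => ⟨(u, v), (mem_filter.1 hv).2⟩) ?_ ?_ ?_ ?_ ?_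
  all_goals simp only [mem_filter, mem_univ, true_and]
  · rintro d rfl
    exact d.adj
  · simp
  · rintro d rfl
    rfl
  · simp
  · rintro d rfl
    rfl

lemma dist_boxProd {α β : Type*} {G : SimpleGraph α} {H : SimpleGraph β} (hG : G.Connected)
    (hH : H.Connected) (x y : α × β) : (G □ H).dist x y = G.dist x.1 y.1 + H.dist x.2 y.2 := by
  rw [dist, edist_boxProd, ENat.toNat_add (edist_ne_top_iff_reachable.2 (hG x.1 y.1))
    (edist_ne_top_iff_reachable.2 (hH x.2 y.2))]
  rfl

instance {α β : Type*} {G : SimpleGraph α} {H : SimpleGraph β} [DecidableEq α] [DecidableEq β]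
    [DecidableRel G.Adj] [DecidableRel H.Adj] : DecidableRel (G □ H).Adj := fun _ _ =>
  decidable_of_iff' _ boxProd_adj

lemma Walk.card_ne_le_mul_length {β ι : Type*} [Fintype ι] {H : SimpleGraph β}
    (χ : ι → β → Bool) {c : ℕ} (hc : ∀ p q, H.Adj p q → #{s | χ s p ≠ χ s q} ≤ c) {p q : β}
    (w : H.Walk p q) : #{s | χ s p ≠ χ s q} ≤ c * w.length := by
  classical
  induction w with
  | nil => simp
  | @cons p q r h w ih =>
    calc #{s | χ s p ≠ χ s r} ≤ #{s | χ s p ≠ χ s q ∨ χ s q ≠ χ s r} :=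
          card_le_card <| monotone_filter_right _ fun s _ hs =>
            not_and_or.1 fun h' => hs (h'.1.trans h'.2)
      _ ≤ c + c * w.length := by
          rw [filter_or]
          exact (card_union_le _ _).trans (add_le_add (hc p q h) ih)
      _ = c * (w.cons h).length := by rw [length_cons]; ring

noncomputable def Connected.geodesic {β : Type*} {H : SimpleGraph β} (hH : H.Connected)
    (x y : β) : H.Walk x y :=
  (hH.exists_walk_length_eq_dist x y).choose

lemma Connected.length_geodesic {β : Type*} {H : SimpleGraph β} (hH : H.Connected) (x y : β) :
    (hH.geodesic x y).length = H.dist x y :=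
  (hH.exists_walk_length_eq_dist x y).choose_spec

end SimpleGraph

namespace Embed

open SimpleGraph

variable {α β : Type*} {G : SimpleGraph α} {H : SimpleGraph β}

lemma pathLen_mk (f : Embed G H) {u v : α} (h : G.Adj u v) :
    pathLen f s(u, v) = (f.path u v h).length := by
  rw [pathLen, Sym2.lift_mk]
  exact dif_pos h

lemma two_mul_wirelength [Fintype α] [DecidableEq α] [DecidableRel G.Adj] (f : Embed G H) :
    2 * wirelength f = ∑ d : G.Dart, (f.path d.fst d.snd d.adj).length := by
  rw [wirelength, ← coe_edgeFinset, finsum_mem_coe_finset, ← smul_eq_mul, ← sum_dart_edge]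
  exact sum_congr rfl fun d _ => pathLen_mk f d.adj

theorem sum_card_cut_le_mul_wirelength [Fintype α] [DecidableEq α] [DecidableRel G.Adj]
    {ι : Type*} [Fintype ι] (f : Embed G H) (χ : ι → β → Bool) {c : ℕ}
    (hc : ∀ p q, H.Adj p q → #{s | χ s p ≠ χ s q} ≤ c) :
    ∑ s, #{d : G.Dart | χ s (f.toEquiv d.fst) ≠ χ s (f.toEquiv d.snd)} ≤
      c * (2 * wirelength f) := by
  rw [two_mul_wirelength, mul_sum]
  simp only [card_filter]
  rw [sum_comm]
  gcongr with d
  rw [← card_filter]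
  exact Walk.card_ne_le_mul_length χ hc _

open Classical in
/-- `WellOrderingRel` only orients each edge, so that `path v u` is the reverse of `path u v`. -/
noncomputable def ofGeodesics (hH : H.Connected) (e : α ≃ β) : Embed G H where
  toEquiv := e
  path u v _ :=
    if WellOrderingRel u v then hH.geodesic (e u) (e v) else (hH.geodesic (e v) (e u)).reverse
  isPath u v _ := by
    split
    · exact Walk.isPath_of_length_eq_dist _ (hH.length_geodesic _ _)
    · exact (Walk.isPath_of_length_eq_dist _ (hH.length_geodesic _ _)).reverse
  symmPath u v h := by
    rcases trichotomous_of WellOrderingRel u v with huv | rfl | hvu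
    · simp [huv, asymm huv]
    · exact absurd h (G.loopless.irrefl _)
    · simp [hvu, asymm hvu]

lemma length_path_ofGeodesics (hH : H.Connected) (e : α ≃ β) {u v : α} (h : G.Adj u v) :
    ((ofGeodesics hH e : Embed G H).path u v h).length = H.dist (e u) (e v) := by
  simp only [ofGeodesics]
  split
  · exact hH.length_geodesic _ _
  · rw [Walk.length_reverse, hH.length_geodesic, dist_comm]

end Embed

lemma minWL_eq_of_le_wirelength {α β : Type*} {G : SimpleGraph α} {H : SimpleGraph β} {n : ℕ}
    (hlow : ∀ f : Embed G H, n ≤ wirelength f) (f₀ : Embed G H) (hf₀ : wirelength f₀ ≤ n) :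
    minWL G H = n :=
  le_antisymm ((Nat.sInf_le ⟨f₀, rfl⟩ : minWL G H ≤ wirelength f₀).trans hf₀)
    (le_csInf ⟨_, f₀, rfl⟩ fun _ ⟨f, hf⟩ => hf ▸ hlow f)

lemma hammingDist_cons {n : ℕ} {β : Type*} [DecidableEq β] (a b : β) (x y : Fin n → β) :
    hammingDist (Fin.cons a x : Fin (n + 1) → β) (Fin.cons b y) =
      (if a = b then 0 else 1) + hammingDist x y := by
  simp only [hammingDist, card_filter, Fin.sum_univ_succ, Fin.cons_zero, Fin.cons_succ]
  split_ifs <;> simp_all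

def consSlice {n : ℕ} {β : Type*} [Fintype β] [DecidableEq β] (S : Finset (Fin (n + 1) → β))
    (b : β) : Finset (Fin n → β) :=
  {x | Fin.cons b x ∈ S}

section consSlice

variable {n : ℕ} {β : Type*} [Fintype β] [DecidableEq β]

lemma sum_eq_sum_sum_consSlice {M : Type*} [AddCommMonoid M] (S : Finset (Fin (n + 1) → β))
    (g : (Fin (n + 1) → β) → M) : ∑ u ∈ S, g u = ∑ b, ∑ x ∈ consSlice S b, g (Fin.cons b x) :=
  calc ∑ u ∈ S, g u = ∑ u, if u ∈ S then g u else 0 := by rw [sum_ite_mem, univ_inter]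
    _ = ∑ p : β × (Fin n → β), if Fin.cons p.1 p.2 ∈ S then g (Fin.cons p.1 p.2) else 0 :=
      ((Fin.consEquiv fun _ => β).sum_comp _).symm
    _ = _ := by simp only [Fintype.sum_prod_type, consSlice, sum_filter]

lemma card_eq_sum_card_consSlice (S : Finset (Fin (n + 1) → β)) :
    #S = ∑ b, #(consSlice S b) := by
  simp only [card_eq_sum_ones, sum_eq_sum_sum_consSlice S]

end consSlice

/-- `cubeEdgeBound k = ∑ i < k, popcount i` is the number of edges of a hypercube spanned by the
first `k` vertices in binary order; the recursion splits them by their lowest bit. -/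
def cubeEdgeBound : ℕ → ℕ
  | 0 => 0
  | 1 => 0
  | n + 2 => cubeEdgeBound ((n + 2) / 2) + cubeEdgeBound ((n + 3) / 2) + (n + 2) / 2

lemma cubeEdgeBound_of_pos {k : ℕ} (hk : 0 < k) :
    cubeEdgeBound k = cubeEdgeBound (k / 2) + cubeEdgeBound ((k + 1) / 2) + k / 2 := by
  match k, hk with
  | 1, _ => simp [cubeEdgeBound]
  | n + 2, _ => rw [cubeEdgeBound]

lemma cubeEdgeBound_add_add_min_le (a b : ℕ) :
    cubeEdgeBound a + cubeEdgeBound b + min a b ≤ cubeEdgeBound (a + b) := by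
  induction hs : a + b using Nat.strong_induction_on generalizing a b with
  | _ s ih =>
  subst hs
  rcases Nat.eq_zero_or_pos a with rfl | ha
  · simp [cubeEdgeBound]
  rcases Nat.eq_zero_or_pos b with rfl | hb
  · simp [cubeEdgeBound]
  rw [cubeEdgeBound_of_pos ha, cubeEdgeBound_of_pos hb, cubeEdgeBound_of_pos (by omega : 0 < a + b)]
  -- The halves of `a + b` are sums of a half of `a` and a half of `b`; pair them accordingly.
  by_cases hodd : a % 2 = 1 ∧ b % 2 = 1
  · have h₁ := ih (a / 2 + (b + 1) / 2) (by omega) _ _ rfl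
    have h₂ := ih ((a + 1) / 2 + b / 2) (by omega) _ _ rfl
    rw [show (a + b) / 2 = a / 2 + (b + 1) / 2 by omega,
      show (a + b + 1) / 2 = (a + 1) / 2 + b / 2 by omega]
    omega
  · have h₁ := ih (a / 2 + b / 2) (by omega) _ _ rfl
    have h₂ := ih ((a + 1) / 2 + (b + 1) / 2) (by omega) _ _ rfl
    rw [show (a + b) / 2 = a / 2 + b / 2 by omega,
      show (a + b + 1) / 2 = (a + 1) / 2 + (b + 1) / 2 by omega]
    omega

instance (n : ℕ) : DecidableRel (Q n).Adj := fun x y =>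
  inferInstanceAs (Decidable (hammingDist x y = 1))

lemma Q_adj_cons {n : ℕ} (a b : Bool) (x y : Fin n → Bool) :
    (Q (n + 1)).Adj (Fin.cons a x) (Fin.cons b y) ↔ if a = b then (Q n).Adj x y else x = y := by
  change hammingDist _ _ = 1 ↔ _
  rw [hammingDist_cons]
  split_ifs <;> simp [Q]

lemma card_filter_Q_adj {n : ℕ} (u : Fin n → Bool) : #{v | (Q n).Adj u v} = n := by
  induction n with
  | zero => simp [Q, hammingDist]
  | succ n ih =>
    induction u using Fin.consCases with
    | cons a x =>
    rw [card_eq_sum_ones, sum_eq_sum_sum_consSlice]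
    cases a <;> simp [consSlice, Q_adj_cons, ih, filter_eq, add_comm]

lemma sum_card_Q_adj_succ {n : ℕ} (S : Finset (Fin (n + 1) → Bool)) :
    ∑ u ∈ S, #{v ∈ S | (Q (n + 1)).Adj u v} =
      ∑ b, ∑ x ∈ consSlice S b, #{y ∈ consSlice S b | (Q n).Adj x y} +
        2 * #(consSlice S false ∩ consSlice S true) := by
  simp only [card_filter, sum_eq_sum_sum_consSlice S, Q_adj_cons, Fintype.sum_bool]
  simp only [↓reduceIte, Bool.true_eq_false, Bool.false_eq_true, sum_ite_eq, sum_add_distrib,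
    sum_boole, Nat.cast_id, filter_mem_eq_inter, inter_comm (consSlice S true)]
  ring

theorem sum_card_Q_adj_le_cubeEdgeBound {n : ℕ} (S : Finset (Fin n → Bool)) :
    ∑ u ∈ S, #{v ∈ S | (Q n).Adj u v} ≤ 2 * cubeEdgeBound #S := by
  induction n with
  | zero =>
    have hnotadj : ∀ u v : Fin 0 → Bool, ¬(Q 0).Adj u v := fun u v => by simp [Q, hammingDist]
    simp [hnotadj]
  | succ n ih =>
    have hinter : #(consSlice S false ∩ consSlice S true) ≤
        min #(consSlice S false) #(consSlice S true) :=
      le_min (card_le_card inter_subset_left) (card_le_card inter_subset_right)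
    have hbound := cubeEdgeBound_add_add_min_le #(consSlice S true) #(consSlice S false)
    have hfalse := ih (consSlice S false)
    have htrue := ih (consSlice S true)
    rw [sum_card_Q_adj_succ, card_eq_sum_card_consSlice, Fintype.sum_bool, Fintype.sum_bool]
    omega

theorem Q_mul_two_pow_le_card_cut_add {n : ℕ} (χ : (Fin n → Bool) → Bool) :
    n * 2 ^ n ≤
      #{d : (Q n).Dart | χ d.fst ≠ χ d.snd} + ∑ b, 2 * cubeEdgeBound #{u | χ u = b} := by
  have hcut : #{d : (Q n).Dart | χ d.fst ≠ χ d.snd} =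
      ∑ u, #{v | (Q n).Adj u v ∧ χ u ≠ χ v} := by
    simp only [card_filter,
      SimpleGraph.sum_dart_eq_sum_sum_adj (Q n) fun u v => if χ u ≠ χ v then 1 else 0,
      sum_filter, ite_and]
  have hdegree : ∀ u,
      #{v | (Q n).Adj u v ∧ χ u ≠ χ v} + #{v | (Q n).Adj u v ∧ χ u = χ v} = n := by
    intro u
    rw [← filter_filter, ← filter_filter, add_comm, card_filter_add_card_filter_not,
      card_filter_Q_adj]
  have hsame : ∑ u, #{v | (Q n).Adj u v ∧ χ u = χ v} =
      ∑ b, ∑ u ∈ {u | χ u = b}, #{v ∈ {v | χ v = b} | (Q n).Adj u v} := by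
    rw [← sum_fiberwise univ χ]
    refine sum_congr rfl fun b _ => sum_congr rfl fun u hu => ?_
    rw [(mem_filter.1 hu).2, filter_filter]
    simp only [and_comm, eq_comm]
  calc n * 2 ^ n =
        ∑ u, (#{v | (Q n).Adj u v ∧ χ u ≠ χ v} + #{v | (Q n).Adj u v ∧ χ u = χ v}) := by
        simp [hdegree, mul_comm]
    _ ≤ _ := by
        rw [sum_add_distrib, hcut, hsame]
        gcongr with b
        exact sum_card_Q_adj_le_cubeEdgeBound _

instance (n : ℕ) : DecidableRel (cycleGraph n).Adj := fun i j =>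
  inferInstanceAs (Decidable (i ≠ j ∧ ((i.val + 1) % n = j.val ∨ (j.val + 1) % n = i.val)))

section cycleGraph

variable {n : ℕ}

lemma cycleGraph_adj_add_one (a : Fin (n + 2)) : (cycleGraph (n + 2)).Adj a (a + 1) :=
  ⟨by simp, Or.inl (by simp [Fin.val_add])⟩

lemma cycleGraph_exists_walk_length (a : Fin (n + 2)) :
    ∀ m (b : Fin (n + 2)), (b - a).val = m → ∃ w : (cycleGraph (n + 2)).Walk a b, w.length = m
  | 0, b, h => ⟨SimpleGraph.Walk.nil.copy rfl (sub_eq_zero.1 (Fin.ext h)).symm, by simp⟩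
  | m + 1, b, h => by
    have hb : (b - 1 - a).val = m := by
      rw [sub_right_comm, Fin.val_sub_one_of_ne_zero (fun h0 => by simp [h0] at h), h]
      rfl
    obtain ⟨w, hw⟩ := cycleGraph_exists_walk_length a m (b - 1) hb
    exact ⟨(w.concat (cycleGraph_adj_add_one (b - 1))).copy rfl (sub_add_cancel b 1), by simp [hw]⟩

lemma cycleGraph_connected : (cycleGraph (n + 2)).Connected :=
  (SimpleGraph.connected_iff_exists_forall_reachable _).2
    ⟨0, fun b => (cycleGraph_exists_walk_length 0 _ b rfl).elim fun w _ => ⟨w⟩⟩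

def cycleDist (a b : Fin (n + 2)) : ℕ :=
  min (b - a).val (a - b).val

lemma cycleGraph_dist_le (a b : Fin (n + 2)) : (cycleGraph (n + 2)).dist a b ≤ cycleDist a b := by
  obtain ⟨w, hw⟩ := cycleGraph_exists_walk_length a _ b rfl
  obtain ⟨w', hw'⟩ := cycleGraph_exists_walk_length b _ a rfl
  exact le_min (hw ▸ SimpleGraph.dist_le w) (SimpleGraph.dist_comm ▸ hw' ▸ SimpleGraph.dist_le w')

end cycleGraph

def torusBand : Fin 8 ⊕ Fin 8 → Fin 8 × Fin 8 → Bool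
  | .inl a, p => (p.1 - a).val < 3
  | .inr a, p => (p.2 - a).val < 3

set_option maxRecDepth 100000 in
lemma card_torusBand_ne_le : ∀ p q, ((cycleGraph 8).boxProd (cycleGraph 8)).Adj p q →
    #{s | torusBand s p ≠ torusBand s q} ≤ 2 := by
  decide

set_option maxRecDepth 100000 in
lemma card_torusBand_true : ∀ s, #{p | torusBand s p = true} = 24 := by
  decide

set_option maxRecDepth 100000 in
lemma card_torusBand_false : ∀ s, #{p | torusBand s p = false} = 40 := by
  decide

theorem le_wirelength_torus (f : Embed (Q 6) ((cycleGraph 8).boxProd (cycleGraph 8))) :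
    320 ≤ wirelength f := by
  have hcut : ∀ s, 80 ≤ #{d : (Q 6).Dart |
      torusBand s (f.toEquiv d.fst) ≠ torusBand s (f.toEquiv d.snd)} := by
    intro s
    have hin : #{u | torusBand s (f.toEquiv u) = true} = 24 :=
      (card_equiv f.toEquiv fun _ => by simp).trans (card_torusBand_true s)
    have hout : #{u | torusBand s (f.toEquiv u) = false} = 40 :=
      (card_equiv f.toEquiv fun _ => by simp).trans (card_torusBand_false s)
    have h24 : cubeEdgeBound 24 = 52 := by simp [cubeEdgeBound]
    have h40 : cubeEdgeBound 40 = 100 := by simp [cubeEdgeBound]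
    have := Q_mul_two_pow_le_card_cut_add fun u => torusBand s (f.toEquiv u)
    rw [Fintype.sum_bool, hin, hout, h24, h40] at this
    omega
  have := calc 4 * 320 = ∑ _s : Fin 8 ⊕ Fin 8, 80 := by simp
    _ ≤ _ := sum_le_sum fun s _ => hcut s
    _ ≤ 2 * (2 * wirelength f) :=
      Embed.sum_card_cut_le_mul_wirelength f torusBand card_torusBand_ne_le
  omega

def grayRank (x : Fin 3 → Bool) : Fin 8 :=
  match x 0, x 1, x 2 with
  | false, false, false => 0
  | true,  false, false => 1
  | true,  true,  false => 2
  | false, true,  false => 3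
  | false, true,  true  => 4
  | true,  true,  true  => 5
  | true,  false, true  => 6
  | false, false, true  => 7

lemma grayRank_bijective : Function.Bijective grayRank := by
  decide

noncomputable def grayPlacement : (Fin 6 → Bool) ≃ Fin 8 × Fin 8 :=
  (Fin.appendEquiv 3 3).symm.trans <|
    (Equiv.ofBijective _ grayRank_bijective).prodCongr (Equiv.ofBijective _ grayRank_bijective)

set_option maxRecDepth 100000 in
lemma sum_cycleDist_grayPlacement :
    ∑ u, ∑ v with (Q 6).Adj u v, (cycleDist (grayPlacement u).1 (grayPlacement v).1 +
      cycleDist (grayPlacement u).2 (grayPlacement v).2) = 640 := by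
  decide

theorem wirelength_ofGeodesics_grayPlacement_le :
    wirelength (Embed.ofGeodesics (cycleGraph_connected.boxProd cycleGraph_connected)
      grayPlacement : Embed (Q 6) ((cycleGraph 8).boxProd (cycleGraph 8))) ≤ 320 := by
  set f : Embed (Q 6) ((cycleGraph 8).boxProd (cycleGraph 8)) :=
    Embed.ofGeodesics (cycleGraph_connected.boxProd cycleGraph_connected) grayPlacement
  have : 2 * wirelength f ≤ 2 * 320 := calc
    2 * wirelength f = ∑ u, ∑ v with (Q 6).Adj u v,
        ((cycleGraph 8).boxProd (cycleGraph 8)).dist (grayPlacement u) (grayPlacement v) := by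
      rw [Embed.two_mul_wirelength, ← SimpleGraph.sum_dart_eq_sum_sum_adj]
      exact sum_congr rfl fun d _ => Embed.length_path_ofGeodesics _ _ d.adj
    _ ≤ ∑ u, ∑ v with (Q 6).Adj u v, (cycleDist (grayPlacement u).1 (grayPlacement v).1 +
        cycleDist (grayPlacement u).2 (grayPlacement v).2) := by
      gcongr with u _ v _
      rw [SimpleGraph.dist_boxProd cycleGraph_connected cycleGraph_connected]
      exact add_le_add (cycleGraph_dist_le _ _) (cycleGraph_dist_le _ _)
    _ = 2 * 320 := sum_cycleDist_grayPlacement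
  omega

/-- The minimum wirelength of embedding the hypercube `Q^6` into the torus
`C_8 × C_8` is `320`. -/
theorem hypercube_torus_wirelength :
    minWL (Q 6) ((cycleGraph 8).boxProd (cycleGraph 8)) = 320 :=
  minWL_eq_of_le_wirelength le_wirelength_torus _ wirelength_ofGeodesics_grayPlacement_le
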